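/- Let a > 0, d ≥ 2, Ω = [−a,a]^d, k ∈ {1,…,d−1}, l ≤ min(k, d−k), and σ₁,…,σ_l ≥ 0. Define f_j(x) = exp(−σ_j·x_j·x_{k+j}) for j = 1,…,l. Let p₁,…,p_l : ℝ^d → ℝ be bounded measurable functions, let δ_j := sup_{x ∈ Ω} |f_j(x) − p_j(x)| and set ε_j := δ_j·exp(σ_j·a²). Then for every f* ∈ L²(Ω) and every κ ∈ {0,1,…,l}: ‖f*·p₁⋯p_κ‖_{L²(Ω)} ≤ (∏_{j=1}^{κ} (1 + ε_j)) · ‖f*·f₁⋯f_κ‖_{L²(Ω)}. -/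

import Mathlib

open MeasureTheory Matrix

noncomputable section

/-- Evaluation of a Tensor-Train decomposition with ranks `r 0, …, r d`:
`T(i₁,…,i_d) = G₁(i₁)⋯G_d(i_d)` written as a sum over all intermediate indices. -/
def ttEval {d : ℕ} {n : Fin d → ℕ} (r : ℕ → ℕ)
    (G : ∀ j : Fin d, Fin (n j) → Fin (r j.1) → Fin (r (j.1 + 1)) → ℝ)
    (i : ∀ j, Fin (n j)) : ℝ :=
  ∑ α : ∀ j : Fin (d + 1), Fin (r j.1),
    ∏ j : Fin d, G j (i j) (α ⟨j.1, by omega⟩) (α ⟨j.1 + 1, by omega⟩)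

/-- `(G, r)` is a Tensor-Train decomposition of the tensor `T` (with ranks `r 0 = r d = 1`). -/
def IsTTRep {d : ℕ} {n : Fin d → ℕ} (T : (∀ j, Fin (n j)) → ℝ) (r : ℕ → ℕ)
    (G : ∀ j : Fin d, Fin (n j) → Fin (r j.1) → Fin (r (j.1 + 1)) → ℝ) : Prop :=
  r 0 = 1 ∧ r d = 1 ∧ ∀ i, T i = ttEval r G i

/-- The `l`-matricization of a tensor: rows are indexed by the first `l` indices,
columns by the remaining ones. -/
def matricize {d : ℕ} {n : Fin d → ℕ} (T : (∀ j, Fin (n j)) → ℝ) (l : ℕ) :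
    Matrix (∀ j : {j : Fin d // j.1 < l}, Fin (n j.1))
      (∀ j : {j : Fin d // ¬ j.1 < l}, Fin (n j.1)) ℝ :=
  fun x y => T fun j => if h : j.1 < l then x ⟨j, h⟩ else y ⟨j, h⟩

/-- Evaluation of a functional Tensor-Train (FTT) decomposition with cores `γ`. -/
def fttEval {d : ℕ} (r : ℕ → ℕ)
    (γ : ∀ j : Fin d, Fin (r j.1) → ℝ → Fin (r (j.1 + 1)) → ℝ)
    (x : Fin d → ℝ) : ℝ :=
  ∑ α : ∀ j : Fin (d + 1), Fin (r j.1),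
    ∏ j : Fin d, γ j (α ⟨j.1, by omega⟩) (x j) (α ⟨j.1 + 1, by omega⟩)

/-- `f` has an FTT representation (almost everywhere) with measurable cores `γ`
and ranks `r 0 = 1, r 1, …, r (d-1), r d = 1`. -/
def IsFTTRepAE {d : ℕ} (f : (Fin d → ℝ) → ℝ) (r : ℕ → ℕ)
    (γ : ∀ j : Fin d, Fin (r j.1) → ℝ → Fin (r (j.1 + 1)) → ℝ) : Prop :=
  r 0 = 1 ∧ r d = 1 ∧ (∀ j a b, Measurable fun t => γ j a t b) ∧
    ∀ᵐ x : Fin d → ℝ, f x = fttEval r γ x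

/-- The first `k` coordinates of `x : ℝ^d` (as an element of `ℝ^k`). -/
def firstCoords (d k : ℕ) (x : Fin d → ℝ) : Fin k → ℝ :=
  fun i => if h : i.1 < d then x ⟨i.1, h⟩ else 0

/-- The last `d - k` coordinates of `x : ℝ^d` (as an element of `ℝ^(d-k)`). -/
def lastCoords (d k : ℕ) (x : Fin d → ℝ) : Fin (d - k) → ℝ :=
  fun i => x ⟨k + i.1, by omega⟩

/-- `g : ℝ^d → ℝ` has `k`-separation rank at most `R`. -/
def HasSepRankLE {d : ℕ} (g : (Fin d → ℝ) → ℝ) (k R : ℕ) : Prop :=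
  ∃ (u : Fin R → (Fin k → ℝ) → ℝ) (v : Fin R → (Fin (d - k) → ℝ) → ℝ),
    (∀ j, MemLp (u j) 2 volume) ∧ (∀ j, MemLp (v j) 2 volume) ∧
    ∀ᵐ x : Fin d → ℝ, g x = ∑ j, u j (firstCoords d k x) * v j (lastCoords d k x)

/-- The unnormalized Gaussian density `f_Γ(x) = exp(-½ xᵀ Γ x)`. -/
def gaussDensity {d : ℕ} (Γ : Matrix (Fin d) (Fin d) ℝ) (x : Fin d → ℝ) : ℝ :=
  Real.exp (-(1 / 2) * (x ⬝ᵥ Γ.mulVec x))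

/-- The cube `[-a, a]^d ⊆ ℝ^d`. -/
def cube (d : ℕ) (a : ℝ) : Set (Fin d → ℝ) := Set.univ.pi fun _ => Set.Icc (-a) a

/-- The `k`-th subdiagonal block `A_k = (Γ_{ij})_{k+1 ≤ i ≤ d, 1 ≤ j ≤ k}` of a `d × d` matrix. -/
def subdiagBlock {d : ℕ} (Γ : Matrix (Fin d) (Fin d) ℝ) (k : ℕ) :
    Matrix (Fin (d - k)) (Fin k) ℝ :=
  fun i j => if h : j.1 < d then Γ ⟨k + i.1, by omega⟩ ⟨j.1, h⟩ else 0

/-- The singular values of a real matrix (in unspecified order):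
square roots of the eigenvalues of `Aᵀ * A`. -/
def singularValues {m k : ℕ} (A : Matrix (Fin m) (Fin k) ℝ) : Fin k → ℝ :=
  fun i => Real.sqrt ((show (Aᵀ * A).IsHermitian by
    have h := Matrix.isHermitian_conjTranspose_mul_self A
    rwa [Matrix.conjTranspose_eq_transpose_of_trivial] at h).eigenvalues i)

end

/-!
On the cube `|x_j x_{k+j}| ≤ a²`, so `f_j ≥ exp(-σ_j a²)`. Hence pointwise on `Ω`
`|p_j| ≤ f_j + δ_j ≤ f_j + δ_j exp(σ_j a²) f_j = (1 + ε_j) f_j`,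
and multiplying these bounds over `j < κ` dominates `|f* p₁⋯p_κ|` pointwise by
`(∏ (1 + ε_j)) |f* f₁⋯f_κ|`.
-/

open Finset

theorem measurableSet_cube (d : ℕ) (a : ℝ) : MeasurableSet (cube d a) :=
  MeasurableSet.univ_pi fun _ => measurableSet_Icc

theorem abs_mul_le_sq_of_mem_cube {d : ℕ} {a : ℝ} {x : Fin d → ℝ} (hx : x ∈ cube d a)
    (i j : Fin d) : |x i * x j| ≤ a ^ 2 := by
  have hcoord : ∀ i, |x i| ≤ a := fun i => abs_le.2 (hx i (Set.mem_univ i))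
  rw [abs_mul, sq]
  exact mul_le_mul (hcoord i) (hcoord j) (abs_nonneg _) ((abs_nonneg _).trans (hcoord i))

theorem exp_neg_mul_mem_Icc {σ b t : ℝ} (hσ : 0 ≤ σ) (ht : |t| ≤ b) :
    Real.exp (-σ * t) ∈ Set.Icc (Real.exp (-(σ * b))) (Real.exp (σ * b)) := by
  obtain ⟨htl, htu⟩ := abs_le.1 ht
  constructor <;> apply Real.exp_le_exp.2 <;> nlinarith

theorem abs_sub_le_iSup_abs_sub {α : Type*} {s : Set α} {f p : α → ℝ} {M N : ℝ}
    (hf : ∀ x ∈ s, |f x| ≤ M) (hp : ∀ x, |p x| ≤ N) {x : α} (hx : x ∈ s) :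
    |f x - p x| ≤ ⨆ y : s, |f y - p y| := by
  refine le_ciSup (f := fun y : s => |f y - p y|) ⟨M + N, ?_⟩ ⟨x, hx⟩
  rintro _ ⟨⟨y, hy⟩, rfl⟩
  exact (abs_sub _ _).trans (add_le_add (hf y hy) (hp y))

theorem abs_le_one_add_mul_exp_mul {f p δ c : ℝ} (hf : Real.exp (-c) ≤ f)
    (h : |f - p| ≤ δ) : |p| ≤ (1 + δ * Real.exp c) * f := by
  have hf0 : 0 ≤ f := (Real.exp_nonneg _).trans hf
  have hδ : 0 ≤ δ := (abs_nonneg _).trans h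
  have hexp_mul : 1 ≤ Real.exp c * f := by
    calc (1 : ℝ) = Real.exp c * Real.exp (-c) := by
          rw [← Real.exp_add, add_neg_cancel, Real.exp_zero]
      _ ≤ Real.exp c * f := by gcongr
  have htriangle : |p| ≤ f + δ := by
    have := abs_sub_abs_le_abs_sub p f
    rw [abs_sub_comm, abs_of_nonneg hf0] at this
    linarith
  nlinarith

theorem norm_mul_prod_le_of_abs_le_mul {ι : Type*} (s : Finset ι) (g : ℝ) {P F c : ι → ℝ}
    (hF : ∀ j ∈ s, 0 ≤ F j) (h : ∀ j ∈ s, |P j| ≤ c j * F j) :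
    ‖g * ∏ j ∈ s, P j‖ ≤ (∏ j ∈ s, c j) * ‖g * ∏ j ∈ s, F j‖ := by
  have hprod : |∏ j ∈ s, P j| ≤ (∏ j ∈ s, c j) * ∏ j ∈ s, F j := by
    rw [abs_prod, ← prod_mul_distrib]
    exact prod_le_prod (fun j _ => abs_nonneg _) h
  rw [Real.norm_eq_abs, Real.norm_eq_abs, abs_mul, abs_mul, abs_of_nonneg (prod_nonneg hF)]
  calc |g| * |∏ j ∈ s, P j| ≤ |g| * ((∏ j ∈ s, c j) * ∏ j ∈ s, F j) := by gcongr
    _ = (∏ j ∈ s, c j) * (|g| * ∏ j ∈ s, F j) := by ring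

/-- Norm stability of replacing the exponential factors `f₁,…,f_κ` by
their interpolants `p₁,…,p_κ`: the `L²(Ω)` norm grows by at most `∏_{j≤κ}(1+ε_j)`. -/
theorem product_interpolation_stability {d : ℕ} (a : ℝ)
    (k : ℕ) (l : ℕ) (hl : l ≤ min k (d - k))
    (σs : Fin l → ℝ) (hσs : ∀ j, 0 ≤ σs j)
    (f : Fin l → (Fin d → ℝ) → ℝ)
    (hf : ∀ (j : Fin l) (x : Fin d → ℝ),
      f j x = Real.exp (-σs j * x ⟨j.1, by omega⟩ * x ⟨k + j.1, by omega⟩))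
    (p : Fin l → (Fin d → ℝ) → ℝ)
    (hpbdd : ∀ j, ∃ M, ∀ x, |p j x| ≤ M)
    (δ : Fin l → ℝ) (hδ : ∀ j, δ j = ⨆ x : cube d a, |f j x.1 - p j x.1|) :
    ∀ (fstar : (Fin d → ℝ) → ℝ),
      MemLp fstar 2 (volume.restrict (cube d a)) →
      ∀ κ : ℕ, κ ≤ l →
        eLpNorm (fun x => fstar x * ∏ j ∈ Finset.univ.filter (fun j : Fin l => j.1 < κ), p j x)
            2 (volume.restrict (cube d a)) ≤
          ENNReal.ofReal
              (∏ j ∈ Finset.univ.filter (fun j : Fin l => j.1 < κ),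
                (1 + δ j * Real.exp (σs j * a ^ 2))) *
            eLpNorm (fun x => fstar x * ∏ j ∈ Finset.univ.filter (fun j : Fin l => j.1 < κ), f j x)
              2 (volume.restrict (cube d a)) := by
  intro fstar _ κ _
  have hf_mem : ∀ j, ∀ x ∈ cube d a,
      f j x ∈ Set.Icc (Real.exp (-(σs j * a ^ 2))) (Real.exp (σs j * a ^ 2)) := by
    intro j x hx
    rw [hf j x, mul_assoc]
    exact exp_neg_mul_mem_Icc (hσs j) (abs_mul_le_sq_of_mem_cube hx _ _)
  have hf_nonneg : ∀ j, ∀ x ∈ cube d a, 0 ≤ f j x := fun j x hx =>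
    (Real.exp_nonneg _).trans (hf_mem j x hx).1
  have hp_le : ∀ j, ∀ x ∈ cube d a,
      |p j x| ≤ (1 + δ j * Real.exp (σs j * a ^ 2)) * f j x := by
    intro j x hx
    obtain ⟨M, hM⟩ := hpbdd j
    have hf_abs : ∀ y ∈ cube d a, |f j y| ≤ Real.exp (σs j * a ^ 2) := fun y hy =>
      (abs_of_nonneg (hf_nonneg j y hy)).trans_le (hf_mem j y hy).2
    refine abs_le_one_add_mul_exp_mul (hf_mem j x hx).1 ?_
    rw [hδ j]
    exact abs_sub_le_iSup_abs_sub hf_abs hM hx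
  refine eLpNorm_le_mul_eLpNorm_of_ae_le_mul ?_ 2
  refine (ae_restrict_iff' (measurableSet_cube d a)).2 (ae_of_all _ fun x hx => ?_)
  exact norm_mul_prod_le_of_abs_le_mul _ _ (fun j _ => hf_nonneg j x hx) fun j _ => hp_le j x hx
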